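/- With the notation of the context, suppose in addition that F⁺(x,y) ≤ M for all (x,y) for some M > 0. Then the form 𝓔^Y(u,u) := 𝓔^{μ,F}(u,u) + ∫_{ℝ^d} u² dρ⁺, where 𝓔^{μ,F}(u,u) := 𝓔(u,u) − ∬_{ℝ^d×ℝ^d} u(x)u(y)(e^{F(x,y)}−1)n(x,y) dy dx − ∫u²dμ⁺ + ∫u²dμ⁻, satisfies the two-sided comparison 𝓔⁻(u,u) ≤ 𝓔^Y(u,u) ≤ e^M · 𝓔⁻(u,u). -/

import Mathlib

noncomputable section

open MeasureTheory Real ENNReal Set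
open scoped Classical

/-- The state space `ℝ^d` with the Euclidean norm and Lebesgue measure. -/
abbrev V (d : ℕ) := EuclideanSpace ℝ (Fin d)

/-- `I(r) = ∫₀^∞ s^{(d+α)/2-1} e^{-s/4 - r²/s} ds`. -/
def Ifun (d : ℕ) (α r : ℝ) : ℝ :=
  ∫ s in Set.Ioi (0 : ℝ), s ^ (((d : ℝ) + α) / 2 - 1) * Real.exp (-s / 4 - r ^ 2 / s)

/-- `ψ(r) = I(r)/I(0)`. -/
def psi (d : ℕ) (α r : ℝ) : ℝ := Ifun d α r / Ifun d α 0

/-- The constant `C(d,-α) = α Γ((d+α)/2) / (2^{1-α} π^{d/2} Γ(1-α/2))`. -/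
def Cconst (d : ℕ) (α : ℝ) : ℝ :=
  α * Real.Gamma (((d : ℝ) + α) / 2) /
    (2 ^ (1 - α) * Real.pi ^ ((d : ℝ) / 2) * Real.Gamma (1 - α / 2))

/-- Jump kernel density `n(x,y) = 2C(d,-α) ψ(m^{1/α}|x-y|) |x-y|^{-(d+α)}` for `x ≠ y`,
with `n(x,x) = 0`. -/
def nker (d : ℕ) (α m : ℝ) (x y : V d) : ℝ :=
  if x = y then 0
  else 2 * Cconst d α * psi d α (m ^ (1 / α) * ‖x - y‖) / ‖x - y‖ ^ ((d : ℝ) + α)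

/-- `F⁺ = F ∨ 0`. -/
def Fp (d : ℕ) (F : V d → V d → ℝ) (x y : V d) : ℝ := max (F x y) 0

/-- `F⁻ = -(F ∧ 0)`. -/
def Fm (d : ℕ) (F : V d → V d → ℝ) (x y : V d) : ℝ := -(min (F x y) 0)

/-- `G⁺ = (e^{F⁺} - 1) e^{-F⁻}`. -/
def Gp (d : ℕ) (F : V d → V d → ℝ) (x y : V d) : ℝ :=
  (Real.exp (Fp d F x y) - 1) * Real.exp (-(Fm d F x y))

/-- `G⁻ = 1 - e^{-F⁻}`. -/
def Gm (d : ℕ) (F : V d → V d → ℝ) (x y : V d) : ℝ := 1 - Real.exp (-(Fm d F x y))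

/-- The Dirichlet form `𝓔(u,u) = (1/2)∬ (u(x)-u(y))² n(x,y) dx dy` (in `[0,∞]`). -/
def En (d : ℕ) (α m : ℝ) (u : V d → ℝ) : ℝ≥0∞ :=
  (1 / 2) * ∫⁻ x, ∫⁻ y, ENNReal.ofReal ((u x - u y) ^ 2 * nker d α m x y)

/-- The jump-type energy `∬ (u(x)-u(y))² G(x,y) n(x,y) dx dy` (in `[0,∞]`). -/
def Jform (d : ℕ) (α m : ℝ) (G : V d → V d → ℝ) (u : V d → ℝ) : ℝ≥0∞ :=
  ∫⁻ x, ∫⁻ y, ENNReal.ofReal ((u x - u y) ^ 2 * G x y * nker d α m x y)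

/-- `NG(x) = ∫ G(x,y) n(x,y) dy` (in `[0,∞]`). -/
def NG (d : ℕ) (α m : ℝ) (G : V d → V d → ℝ) (x : V d) : ℝ≥0∞ :=
  ∫⁻ y, ENNReal.ofReal (G x y * nker d α m x y)

/-- `ρ = μ + ξ_G` where `ξ_G(dx) = NG(x) dx`. -/
def rho (d : ℕ) (α m : ℝ) (G : V d → V d → ℝ) (μ : Measure (V d)) : Measure (V d) :=
  μ + volume.withDensity (NG d α m G)

/-- `∫ u² dμ` (in `[0,∞]`). -/
def sqInt (d : ℕ) (u : V d → ℝ) (μ : Measure (V d)) : ℝ≥0∞ :=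
  ∫⁻ x, ENNReal.ofReal ((u x) ^ 2) ∂μ

/-- The cross term `∬ u(x)u(y)(e^{F(x,y)}-1) n(x,y) dy dx` (Lebesgue–Bochner integral on the
product space). -/
def crossInt (d : ℕ) (α m : ℝ) (F : V d → V d → ℝ) (u : V d → ℝ) : ℝ :=
  ∫ p : V d × V d, u p.1 * u p.2 * (Real.exp (F p.1 p.2) - 1) * nker d α m p.1 p.2

/-- The quadratic form
`𝓔^{μ,F}(u,u) = 𝓔(u,u) - ∬ u(x)u(y)(e^{F(x,y)}-1)n(x,y) dy dx - ∫ u² dμ⁺ + ∫ u² dμ⁻`. -/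
def EmuF (d : ℕ) (α m : ℝ) (F : V d → V d → ℝ) (μp μm : Measure (V d)) (u : V d → ℝ) : ℝ :=
  (En d α m u).toReal - crossInt d α m F u - (sqInt d u μp).toReal + (sqInt d u μm).toReal

/-- The killed form
`𝓔⁻(u,u) = (1/2)∬ (u(x)-u(y))² e^{-F⁻(x,y)} n(x,y) dx dy + ∫ u² dρ⁻` (in `[0,∞]`). -/
def EnMinus (d : ℕ) (α m : ℝ) (F : V d → V d → ℝ) (μm : Measure (V d)) (u : V d → ℝ) : ℝ≥0∞ :=
  (1 / 2) * (∫⁻ x, ∫⁻ y, ENNReal.ofReal ((u x - u y) ^ 2 * Real.exp (-(Fm d F x y)) * nker d α m x y))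
    + sqInt d u (rho d α m (Gm d F) μm)

/-! The cross term is split by the pointwise identity `e^F = 1 + G⁺ - G⁻`: after symmetrizing
`u(x)² + u(y)²` against `G^± n`, one gets `𝓔^Y(u,u) = (1/2)∬ (u(x)-u(y))² e^F n + ∫ u² dρ⁻`.
The comparison then reduces to the pointwise bounds `e^{-F⁻} ≤ e^F = e^{F⁺} e^{-F⁻} ≤ e^M e^{-F⁻}`
and `1 ≤ e^M`. -/

theorem integral_sub_eq_toReal_lintegral_sub {X : Type*} [MeasurableSpace X] {μ : Measure X}
    {g h : X → ℝ} (hg : Measurable g) (hh : Measurable h) (hg0 : 0 ≤ g) (hh0 : 0 ≤ h)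
    (hg_fin : ∫⁻ x, ENNReal.ofReal (g x) ∂μ ≠ ⊤) (hh_fin : ∫⁻ x, ENNReal.ofReal (h x) ∂μ ≠ ⊤) :
    ∫ x, (g x - h x) ∂μ
      = (∫⁻ x, ENNReal.ofReal (g x) ∂μ).toReal - (∫⁻ x, ENNReal.ofReal (h x) ∂μ).toReal := by
  rw [integral_sub
      ((lintegral_ofReal_ne_top_iff_integrable hg.aestronglyMeasurable (ae_of_all _ hg0)).1 hg_fin)
      ((lintegral_ofReal_ne_top_iff_integrable hh.aestronglyMeasurable (ae_of_all _ hh0)).1 hh_fin),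
    integral_eq_lintegral_of_nonneg_ae (ae_of_all _ hg0) hg.aestronglyMeasurable,
    integral_eq_lintegral_of_nonneg_ae (ae_of_all _ hh0) hh.aestronglyMeasurable]

theorem lintegral_prod_sq_add_sq_mul {X : Type*} [MeasurableSpace X] {μ : Measure X} [SFinite μ]
    {k : X → X → ℝ} (hk : Measurable (Function.uncurry k)) (hk0 : ∀ x y, 0 ≤ k x y)
    (hk_comm : ∀ x y, k x y = k y x) {u : X → ℝ} (hu : Measurable u) :
    ∫⁻ p, ENNReal.ofReal ((u p.1 ^ 2 + u p.2 ^ 2) * k p.1 p.2) ∂μ.prod μ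
      = 2 * ∫⁻ x, ENNReal.ofReal (u x ^ 2) * ∫⁻ y, ENNReal.ofReal (k x y) ∂μ ∂μ := by
  have hk' : Measurable fun p : X × X => k p.1 p.2 := hk
  set f : X × X → ℝ≥0∞ := fun p => ENNReal.ofReal (u p.1 ^ 2 * k p.1 p.2) with hf_def
  have hf : Measurable f := by fun_prop
  have hsplit : ∀ p : X × X,
      ENNReal.ofReal ((u p.1 ^ 2 + u p.2 ^ 2) * k p.1 p.2) = f p + f p.swap := by
    intro p
    simp only [hf_def, Prod.fst_swap, Prod.snd_swap]
    rw [hk_comm p.2 p.1, ← ENNReal.ofReal_add (mul_nonneg (sq_nonneg _) (hk0 _ _))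
        (mul_nonneg (sq_nonneg _) (hk0 _ _)), add_mul]
  calc ∫⁻ p, ENNReal.ofReal ((u p.1 ^ 2 + u p.2 ^ 2) * k p.1 p.2) ∂μ.prod μ
      = ∫⁻ p, f p ∂μ.prod μ + ∫⁻ p, f p.swap ∂μ.prod μ := by
        simp_rw [hsplit]; exact lintegral_add_left hf _
    _ = 2 * ∫⁻ p, f p ∂μ.prod μ := by rw [lintegral_prod_swap f, two_mul]
    _ = 2 * ∫⁻ x, ENNReal.ofReal (u x ^ 2) * ∫⁻ y, ENNReal.ofReal (k x y) ∂μ ∂μ := by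
        rw [lintegral_prod f hf.aemeasurable]
        congr 1
        refine lintegral_congr fun x => ?_
        simp_rw [hf_def, ENNReal.ofReal_mul (sq_nonneg (u x))]
        exact lintegral_const_mul _ (by fun_prop)

section Kernel

variable {d : ℕ} {α : ℝ}

theorem Ifun_nonneg (r : ℝ) : 0 ≤ Ifun d α r :=
  setIntegral_nonneg measurableSet_Ioi fun _ hs =>
    mul_nonneg (Real.rpow_nonneg (le_of_lt hs) _) (Real.exp_nonneg _)

theorem measurable_Ifun : Measurable (Ifun d α) := by
  have h : StronglyMeasurable fun p : ℝ × ℝ =>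
      p.2 ^ (((d : ℝ) + α) / 2 - 1) * Real.exp (-p.2 / 4 - p.1 ^ 2 / p.2) := by
    apply Measurable.stronglyMeasurable; fun_prop
  exact (h.integral_prod_right' (ν := volume.restrict (Set.Ioi 0))).measurable

theorem Cconst_nonneg (hα0 : 0 < α) (hα2 : α < 2) : 0 ≤ Cconst d α := by
  have hΓ₁ : 0 < Real.Gamma (((d : ℝ) + α) / 2) := Real.Gamma_pos_of_pos (by positivity)
  have hΓ₂ : 0 < Real.Gamma (1 - α / 2) := Real.Gamma_pos_of_pos (by linarith)
  unfold Cconst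
  positivity

variable {m : ℝ}

theorem nker_nonneg (hα0 : 0 < α) (hα2 : α < 2) (x y : V d) : 0 ≤ nker d α m x y := by
  have hC := Cconst_nonneg (d := d) hα0 hα2
  have hψ : 0 ≤ psi d α (m ^ (1 / α) * ‖x - y‖) := div_nonneg (Ifun_nonneg _) (Ifun_nonneg _)
  unfold nker
  split_ifs
  · exact le_rfl
  · positivity

theorem nker_comm (x y : V d) : nker d α m x y = nker d α m y x := by
  simp only [nker, norm_sub_rev x y, eq_comm (a := x)]

theorem measurable_nker : Measurable (Function.uncurry (nker d α m)) := by
  have hI := measurable_Ifun (d := d) (α := α)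
  have hnorm : Measurable fun p : V d × V d => ‖p.1 - p.2‖ := by fun_prop
  refine Measurable.ite (isClosed_eq continuous_fst continuous_snd).measurableSet
    measurable_const ?_
  unfold psi
  fun_prop

end Kernel

section Perturbation

variable {d : ℕ} {F : V d → V d → ℝ}

theorem Fp_nonneg (x y : V d) : 0 ≤ Fp d F x y := le_max_right _ _

theorem Fm_nonneg (x y : V d) : 0 ≤ Fm d F x y := neg_nonneg.mpr (min_le_right _ _)

theorem Fp_sub_Fm (x y : V d) : Fp d F x y - Fm d F x y = F x y := by
  simp only [Fp, Fm, sub_neg_eq_add, max_add_min, add_zero]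

theorem exp_neg_Fm_le_one (x y : V d) : Real.exp (-(Fm d F x y)) ≤ 1 :=
  Real.exp_le_one_iff.mpr (neg_nonpos.mpr (Fm_nonneg x y))

theorem exp_neg_Fm_le_exp (x y : V d) : Real.exp (-(Fm d F x y)) ≤ Real.exp (F x y) := by
  rw [Real.exp_le_exp, ← Fp_sub_Fm (F := F) x y]
  linarith [Fp_nonneg (F := F) x y]

theorem exp_le_exp_mul_exp_neg_Fm {M : ℝ} (hM : ∀ x y, Fp d F x y ≤ M) (x y : V d) :
    Real.exp (F x y) ≤ Real.exp M * Real.exp (-(Fm d F x y)) := by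
  rw [← Real.exp_add, Real.exp_le_exp, ← Fp_sub_Fm (F := F) x y]
  linarith [hM x y]

theorem Gp_nonneg (x y : V d) : 0 ≤ Gp d F x y :=
  mul_nonneg (sub_nonneg.mpr (Real.one_le_exp (Fp_nonneg x y))) (Real.exp_nonneg _)

theorem Gm_nonneg (x y : V d) : 0 ≤ Gm d F x y := sub_nonneg.mpr (exp_neg_Fm_le_one x y)

theorem exp_eq_one_add_Gp_sub_Gm (x y : V d) :
    Real.exp (F x y) = 1 + Gp d F x y - Gm d F x y := by
  rw [← Fp_sub_Fm (F := F) x y, sub_eq_add_neg, Real.exp_add, Gp, Gm]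
  ring

theorem Gp_comm (hF : ∀ x y, F x y = F y x) (x y : V d) : Gp d F x y = Gp d F y x := by
  simp only [Gp, Fp, Fm, hF x y]

theorem Gm_comm (hF : ∀ x y, F x y = F y x) (x y : V d) : Gm d F x y = Gm d F y x := by
  simp only [Gm, Fm, hF x y]

theorem measurable_Gp (hF : Measurable (Function.uncurry F)) :
    Measurable (Function.uncurry (Gp d F)) := by
  have hF' : Measurable fun p : V d × V d => F p.1 p.2 := hF
  unfold Function.uncurry Gp Fp Fm
  fun_prop

theorem measurable_Gm (hF : Measurable (Function.uncurry F)) :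
    Measurable (Function.uncurry (Gm d F)) := by
  have hF' : Measurable fun p : V d × V d => F p.1 p.2 := hF
  unfold Function.uncurry Gm Fm
  fun_prop

end Perturbation

section Energy

variable {d : ℕ} {α m : ℝ}

theorem measurable_NG {G : V d → V d → ℝ} (hG : Measurable (Function.uncurry G)) :
    Measurable (NG d α m G) := by
  have hG' : Measurable fun p : V d × V d => G p.1 p.2 := hG
  have hn : Measurable fun p : V d × V d => nker d α m p.1 p.2 := measurable_nker
  exact Measurable.lintegral_prod_right'
    (f := fun p : V d × V d => ENNReal.ofReal (G p.1 p.2 * nker d α m p.1 p.2)) (by fun_prop)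

theorem sqInt_rho {G : V d → V d → ℝ} (hG : Measurable (Function.uncurry G)) (μ : Measure (V d))
    {u : V d → ℝ} (hu : Measurable u) :
    sqInt d u (rho d α m G μ) = sqInt d u μ + ∫⁻ x, ENNReal.ofReal (u x ^ 2) * NG d α m G x := by
  rw [sqInt, rho, lintegral_add_measure,
    lintegral_withDensity_eq_lintegral_mul _ (measurable_NG hG) (by fun_prop)]
  simp only [sqInt, Pi.mul_apply, mul_comm]

theorem Jform_one (u : V d → ℝ) : Jform d α m (fun _ _ => 1) u = 2 * En d α m u := by
  simp only [Jform, En, mul_one]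
  rw [← mul_assoc, one_div, ENNReal.mul_inv_cancel two_ne_zero ENNReal.ofNat_ne_top, one_mul]

theorem EnMinus_eq (F : V d → V d → ℝ) (μm : Measure (V d)) (u : V d → ℝ) :
    EnMinus d α m F μm u
      = 1 / 2 * Jform d α m (fun x y => Real.exp (-(Fm d F x y))) u
        + sqInt d u (rho d α m (Gm d F) μm) :=
  rfl

theorem Jform_le_ofReal_mul (hα0 : 0 < α) (hα2 : α < 2) {G G' : V d → V d → ℝ} {c : ℝ}
    (hc : 0 ≤ c) (h : ∀ x y, G' x y ≤ c * G x y) (u : V d → ℝ) :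
    Jform d α m G' u ≤ ENNReal.ofReal c * Jform d α m G u := by
  simp only [Jform, ← lintegral_const_mul' _ _ ENNReal.ofReal_ne_top, ← ENNReal.ofReal_mul hc]
  refine lintegral_mono fun x => lintegral_mono fun y => ENNReal.ofReal_le_ofReal ?_
  have hn := nker_nonneg (m := m) hα0 hα2 x y
  have hsq := sq_nonneg (u x - u y)
  calc (u x - u y) ^ 2 * G' x y * nker d α m x y
      ≤ (u x - u y) ^ 2 * (c * G x y) * nker d α m x y := by gcongr; exact h x y
    _ = c * ((u x - u y) ^ 2 * G x y * nker d α m x y) := by ring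

theorem Jform_mono (hα0 : 0 < α) (hα2 : α < 2) {G G' : V d → V d → ℝ}
    (h : ∀ x y, G' x y ≤ G x y) (u : V d → ℝ) : Jform d α m G' u ≤ Jform d α m G u := by
  simpa using Jform_le_ofReal_mul hα0 hα2 zero_le_one (by simpa using h) u

theorem lintegral_prod_eq_Jform_add_NG (hα0 : 0 < α) (hα2 : α < 2) {G G' : V d → V d → ℝ}
    (hG : Measurable (Function.uncurry G)) (hG' : Measurable (Function.uncurry G'))
    (hG0 : ∀ x y, 0 ≤ G x y) (hG'0 : ∀ x y, 0 ≤ G' x y) (hG_comm : ∀ x y, G x y = G y x)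
    {u : V d → ℝ} (hu : Measurable u) :
    ∫⁻ p : V d × V d, ENNReal.ofReal ((u p.1 - u p.2) ^ 2 * G' p.1 p.2 * nker d α m p.1 p.2
        + (u p.1 ^ 2 + u p.2 ^ 2) * (G p.1 p.2 * nker d α m p.1 p.2))
      = Jform d α m G' u + 2 * ∫⁻ x, ENNReal.ofReal (u x ^ 2) * NG d α m G x := by
  have hn0 : ∀ x y, 0 ≤ nker d α m x y := nker_nonneg hα0 hα2
  have hGm : Measurable fun p : V d × V d => G p.1 p.2 := hG
  have hG'm : Measurable fun p : V d × V d => G' p.1 p.2 := hG'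
  have hnm : Measurable fun p : V d × V d => nker d α m p.1 p.2 := measurable_nker
  have hJ : Measurable fun p : V d × V d =>
      ENNReal.ofReal ((u p.1 - u p.2) ^ 2 * G' p.1 p.2 * nker d α m p.1 p.2) := by fun_prop
  rw [lintegral_congr fun p : V d × V d => ENNReal.ofReal_add
      (mul_nonneg (mul_nonneg (sq_nonneg (u p.1 - u p.2)) (hG'0 p.1 p.2)) (hn0 p.1 p.2))
      (mul_nonneg (add_nonneg (sq_nonneg (u p.1)) (sq_nonneg (u p.2)))
        (mul_nonneg (hG0 p.1 p.2) (hn0 p.1 p.2))),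
    lintegral_add_left hJ, Measure.volume_eq_prod, lintegral_prod _ hJ.aemeasurable,
    lintegral_prod_sq_add_sq_mul (by exact hGm.mul hnm)
      (fun x y => mul_nonneg (hG0 x y) (hn0 x y))
      (fun x y => by rw [hG_comm, nker_comm]) hu]
  rfl

end Energy

section Comparison

variable {d : ℕ} {α m : ℝ} {F : V d → V d → ℝ} {u : V d → ℝ}

theorem two_mul_crossInt (hα0 : 0 < α) (hα2 : α < 2) (hF : Measurable (Function.uncurry F))
    (hF_comm : ∀ x y, F x y = F y x) (hu : Measurable u)
    (hJ₁ : Jform d α m (fun _ _ => 1) u ≠ ⊤)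
    (hJe : Jform d α m (fun x y => Real.exp (F x y)) u ≠ ⊤)
    (hNGp : ∫⁻ x, ENNReal.ofReal (u x ^ 2) * NG d α m (Gp d F) x ≠ ⊤)
    (hNGm : ∫⁻ x, ENNReal.ofReal (u x ^ 2) * NG d α m (Gm d F) x ≠ ⊤) :
    2 * crossInt d α m F u
      = (Jform d α m (fun _ _ => 1) u
            + 2 * ∫⁻ x, ENNReal.ofReal (u x ^ 2) * NG d α m (Gp d F) x).toReal
        - (Jform d α m (fun x y => Real.exp (F x y)) u
            + 2 * ∫⁻ x, ENNReal.ofReal (u x ^ 2) * NG d α m (Gm d F) x).toReal := by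
  have hF' : Measurable fun p : V d × V d => F p.1 p.2 := hF
  have hGp : Measurable fun p : V d × V d => Gp d F p.1 p.2 := measurable_Gp hF
  have hGm : Measurable fun p : V d × V d => Gm d F p.1 p.2 := measurable_Gm hF
  have hn : Measurable fun p : V d × V d => nker d α m p.1 p.2 := measurable_nker
  have hn0 : ∀ x y, 0 ≤ nker d α m x y := nker_nonneg hα0 hα2
  set g : V d × V d → ℝ := fun p => (u p.1 - u p.2) ^ 2 * 1 * nker d α m p.1 p.2
    + (u p.1 ^ 2 + u p.2 ^ 2) * (Gp d F p.1 p.2 * nker d α m p.1 p.2) with hg_def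
  set h : V d × V d → ℝ := fun p =>
    (u p.1 - u p.2) ^ 2 * Real.exp (F p.1 p.2) * nker d α m p.1 p.2
      + (u p.1 ^ 2 + u p.2 ^ 2) * (Gm d F p.1 p.2 * nker d α m p.1 p.2) with hh_def
  have hg : ∫⁻ p, ENNReal.ofReal (g p)
      = Jform d α m (fun _ _ => 1) u
        + 2 * ∫⁻ x, ENNReal.ofReal (u x ^ 2) * NG d α m (Gp d F) x :=
    lintegral_prod_eq_Jform_add_NG hα0 hα2 (measurable_Gp hF) measurable_const Gp_nonneg
      (fun _ _ => zero_le_one) (Gp_comm hF_comm) hu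
  have hh : ∫⁻ p, ENNReal.ofReal (h p)
      = Jform d α m (fun x y => Real.exp (F x y)) u
        + 2 * ∫⁻ x, ENNReal.ofReal (u x ^ 2) * NG d α m (Gm d F) x :=
    lintegral_prod_eq_Jform_add_NG (G' := fun x y => Real.exp (F x y)) hα0 hα2
      (measurable_Gm hF) (Real.measurable_exp.comp hF) Gm_nonneg (fun _ _ => (Real.exp_pos _).le)
      (Gm_comm hF_comm) hu
  have hg0 : 0 ≤ g := fun p => add_nonneg
    (mul_nonneg (mul_nonneg (sq_nonneg _) zero_le_one) (hn0 _ _))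
    (mul_nonneg (add_nonneg (sq_nonneg _) (sq_nonneg _)) (mul_nonneg (Gp_nonneg _ _) (hn0 _ _)))
  have hh0 : 0 ≤ h := fun p => add_nonneg
    (mul_nonneg (mul_nonneg (sq_nonneg _) (Real.exp_pos _).le) (hn0 _ _))
    (mul_nonneg (add_nonneg (sq_nonneg _) (sq_nonneg _)) (mul_nonneg (Gm_nonneg _ _) (hn0 _ _)))
  calc 2 * crossInt d α m F u = ∫ p, (g p - h p) := by
        rw [crossInt, ← integral_const_mul]
        congr 1 with p
        simp only [hg_def, hh_def, exp_eq_one_add_Gp_sub_Gm]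
        ring
    _ = _ := by
        rw [integral_sub_eq_toReal_lintegral_sub (by fun_prop) (by fun_prop) hg0 hh0
          (hg ▸ ENNReal.add_ne_top.2 ⟨hJ₁, ENNReal.mul_ne_top ENNReal.ofNat_ne_top hNGp⟩)
          (hh ▸ ENNReal.add_ne_top.2 ⟨hJe, ENNReal.mul_ne_top ENNReal.ofNat_ne_top hNGm⟩), hg, hh]

theorem EmuF_add_sqInt_rho_Gp_eq (hα0 : 0 < α) (hα2 : α < 2)
    (hF : Measurable (Function.uncurry F)) (hF_comm : ∀ x y, F x y = F y x)
    {μp μm : Measure (V d)} (hu : Measurable u)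
    (hE : En d α m u ≠ ⊤) (hJe : Jform d α m (fun x y => Real.exp (F x y)) u ≠ ⊤)
    (hμp : sqInt d u μp ≠ ⊤) (hμm : sqInt d u μm ≠ ⊤)
    (hNGp : ∫⁻ x, ENNReal.ofReal (u x ^ 2) * NG d α m (Gp d F) x ≠ ⊤)
    (hNGm : ∫⁻ x, ENNReal.ofReal (u x ^ 2) * NG d α m (Gm d F) x ≠ ⊤) :
    EmuF d α m F μp μm u + (sqInt d u (rho d α m (Gp d F) μp)).toReal
      = (1 / 2 * Jform d α m (fun x y => Real.exp (F x y)) u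
          + sqInt d u (rho d α m (Gm d F) μm)).toReal := by
  have hJ₁ : Jform d α m (fun _ _ => 1) u ≠ ⊤ := by
    rw [Jform_one]; exact ENNReal.mul_ne_top ENNReal.ofNat_ne_top hE
  have hcross := two_mul_crossInt hα0 hα2 hF hF_comm hu hJ₁ hJe hNGp hNGm
  rw [Jform_one] at hcross
  rw [EmuF, sqInt_rho (measurable_Gp hF) μp hu, sqInt_rho (measurable_Gm hF) μm hu]
  have h2 {a : ℝ≥0∞} (ha : a ≠ ⊤) : 2 * a ≠ ⊤ := ENNReal.mul_ne_top ENNReal.ofNat_ne_top ha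
  rw [ENNReal.toReal_add (h2 hE) (h2 hNGp), ENNReal.toReal_add hJe (h2 hNGm)] at hcross
  rw [ENNReal.toReal_add (ENNReal.mul_ne_top (by simp) hJe) (ENNReal.add_ne_top.2 ⟨hμm, hNGm⟩),
    ENNReal.toReal_add hμp hNGp, ENNReal.toReal_add hμm hNGm]
  simp only [ENNReal.toReal_mul, ENNReal.toReal_div, ENNReal.toReal_one, ENNReal.toReal_ofNat]
    at hcross ⊢
  linarith

theorem Jform_exp_neg_Fm_ne_top (hα0 : 0 < α) (hα2 : α < 2) (hE : En d α m u ≠ ⊤) :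
    Jform d α m (fun x y => Real.exp (-(Fm d F x y))) u ≠ ⊤ :=
  ne_top_of_le_ne_top (by rw [Jform_one]; exact ENNReal.mul_ne_top ENNReal.ofNat_ne_top hE)
    (Jform_mono hα0 hα2 exp_neg_Fm_le_one u)

theorem Jform_exp_ne_top (hα0 : 0 < α) (hα2 : α < 2) {M : ℝ} (hM : ∀ x y, Fp d F x y ≤ M)
    (hE : En d α m u ≠ ⊤) : Jform d α m (fun x y => Real.exp (F x y)) u ≠ ⊤ :=
  ne_top_of_le_ne_top
    (ENNReal.mul_ne_top ENNReal.ofReal_ne_top (Jform_exp_neg_Fm_ne_top hα0 hα2 hE))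
    (Jform_le_ofReal_mul hα0 hα2 (Real.exp_pos M).le (exp_le_exp_mul_exp_neg_Fm hM) u)

theorem EnMinus_ne_top (hα0 : 0 < α) (hα2 : α < 2) (hF : Measurable (Function.uncurry F))
    {μm : Measure (V d)} (hu : Measurable u) (hE : En d α m u ≠ ⊤) (hμm : sqInt d u μm ≠ ⊤)
    (hNGm : ∫⁻ x, ENNReal.ofReal (u x ^ 2) * NG d α m (Gm d F) x ≠ ⊤) :
    EnMinus d α m F μm u ≠ ⊤ := by
  rw [EnMinus_eq, sqInt_rho (measurable_Gm hF) μm hu]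
  exact ENNReal.add_ne_top.2 ⟨ENNReal.mul_ne_top (by simp) (Jform_exp_neg_Fm_ne_top hα0 hα2 hE),
    ENNReal.add_ne_top.2 ⟨hμm, hNGm⟩⟩

theorem EnMinus_le_half_Jform_exp_add (hα0 : 0 < α) (hα2 : α < 2) (μm : Measure (V d)) :
    EnMinus d α m F μm u
      ≤ 1 / 2 * Jform d α m (fun x y => Real.exp (F x y)) u
        + sqInt d u (rho d α m (Gm d F) μm) := by
  rw [EnMinus_eq]
  gcongr
  exact Jform_mono hα0 hα2 exp_neg_Fm_le_exp u

theorem half_Jform_exp_add_le_exp_mul_EnMinus (hα0 : 0 < α) (hα2 : α < 2) {M : ℝ}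
    (hM : ∀ x y, Fp d F x y ≤ M) (μm : Measure (V d)) :
    1 / 2 * Jform d α m (fun x y => Real.exp (F x y)) u + sqInt d u (rho d α m (Gm d F) μm)
      ≤ ENNReal.ofReal (Real.exp M) * EnMinus d α m F μm u := by
  have hexp : 1 ≤ ENNReal.ofReal (Real.exp M) :=
    ENNReal.one_le_ofReal.2 (Real.one_le_exp ((Fp_nonneg 0 0).trans (hM 0 0)))
  rw [EnMinus_eq, mul_add, ← mul_assoc, mul_comm _ (1 / 2), mul_assoc]
  gcongr
  · exact Jform_le_ofReal_mul hα0 hα2 (Real.exp_pos M).le (exp_le_exp_mul_exp_neg_Fm hM) u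
  · exact le_mul_of_one_le_left' hexp

end Comparison

theorem EY_comparison_general
    (d : ℕ) (α m : ℝ) (hα0 : 0 < α) (hα2 : α < 2)
    (F : V d → V d → ℝ) (hFmeas : Measurable (Function.uncurry F))
    (hFsymm : ∀ x y, F x y = F y x)
    (μp μm : Measure (V d))
    (u : V d → ℝ) (hu : Measurable u)
    (hE : En d α m u ≠ ⊤)
    (hμp : sqInt d u μp ≠ ⊤) (hμm : sqInt d u μm ≠ ⊤)
    (hNGp : ∫⁻ x, ENNReal.ofReal ((u x) ^ 2) * NG d α m (Gp d F) x ≠ ⊤)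
    (hNGm : ∫⁻ x, ENNReal.ofReal ((u x) ^ 2) * NG d α m (Gm d F) x ≠ ⊤)
    (M₀ : ℝ) (hFpB : ∀ x y, Fp d F x y ≤ M₀) :
    (EnMinus d α m F μm u).toReal
      ≤ EmuF d α m F μp μm u + (sqInt d u (rho d α m (Gp d F) μp)).toReal ∧
    EmuF d α m F μp μm u + (sqInt d u (rho d α m (Gp d F) μp)).toReal
      ≤ Real.exp M₀ * (EnMinus d α m F μm u).toReal := by
  have hfin : ENNReal.ofReal (Real.exp M₀) * EnMinus d α m F μm u ≠ ⊤ :=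
    ENNReal.mul_ne_top ENNReal.ofReal_ne_top (EnMinus_ne_top hα0 hα2 hFmeas hu hE hμm hNGm)
  have hupper := half_Jform_exp_add_le_exp_mul_EnMinus (m := m) (u := u) hα0 hα2 hFpB μm
  rw [EmuF_add_sqInt_rho_Gp_eq hα0 hα2 hFmeas hFsymm hu hE (Jform_exp_ne_top hα0 hα2 hFpB hE)
    hμp hμm hNGp hNGm]
  constructor
  · exact ENNReal.toReal_mono (ne_top_of_le_ne_top hfin hupper)
      (EnMinus_le_half_Jform_exp_add hα0 hα2 μm)
  · simpa [ENNReal.toReal_mul, ENNReal.toReal_ofReal (Real.exp_pos M₀).le] using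
      ENNReal.toReal_mono hfin hupper

/-- If moreover `F⁺ ≤ M₀` for some `M₀ > 0`, then
`𝓔⁻(u,u) ≤ 𝓔^Y(u,u) ≤ e^{M₀} 𝓔⁻(u,u)`, where
`𝓔^Y(u,u) = 𝓔^{μ,F}(u,u) + ∫ u² dρ⁺`. -/
theorem EY_comparison
    (d : ℕ) (hd : 1 ≤ d) (α m : ℝ) (hα0 : 0 < α) (hα2 : α < 2) (hm : 0 ≤ m)
    (F : V d → V d → ℝ) (hFmeas : Measurable (Function.uncurry F))
    (hFbound : ∃ M : ℝ, ∀ x y, |F x y| ≤ M)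
    (hFsymm : ∀ x y, F x y = F y x) (hFdiag : ∀ x, F x x = 0)
    (μp μm : Measure (V d))
    (u : V d → ℝ) (hu : Measurable u)
    (hE : En d α m u ≠ ⊤)
    (hμp : sqInt d u μp ≠ ⊤) (hμm : sqInt d u μm ≠ ⊤)
    (hNGp : ∫⁻ x, ENNReal.ofReal ((u x) ^ 2) * NG d α m (Gp d F) x ≠ ⊤)
    (hNGm : ∫⁻ x, ENNReal.ofReal ((u x) ^ 2) * NG d α m (Gm d F) x ≠ ⊤)
    (M₀ : ℝ) (hM₀ : 0 < M₀) (hFpB : ∀ x y, Fp d F x y ≤ M₀) :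
    (EnMinus d α m F μm u).toReal
      ≤ EmuF d α m F μp μm u + (sqInt d u (rho d α m (Gp d F) μp)).toReal ∧
    EmuF d α m F μp μm u + (sqInt d u (rho d α m (Gp d F) μp)).toReal
      ≤ Real.exp M₀ * (EnMinus d α m F μm u).toReal :=
  EY_comparison_general d α m hα0 hα2 F hFmeas hFsymm μp μm u hu hE hμp hμm hNGp hNGm M₀ hFpB
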